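/- Let S be a Gröbner–Shirshov basis in D(X) and s₁, s₂ ∈ S. If w = a₁·d^ī(s̄₁)·b₁ = a₂·d^j̄(s̄₂)·b₂ for some a₁, a₂, b₁, b₂ ∈ T, then a₁·D^ī(s₁)·b₁ − a₂·D^j̄(s₂)·b₂ ≡ 0 mod (S, w). -/

import Mathlib

/-- A letter `D^ī(x)` of the free differential algebra: the word `ī` of operator
indices together with the generator `x`. -/
abbrev Letter (J X : Type*) := List J × X

variable {k J X : Type*} [CommRing k]

/-- The monomial of `D(X) = k⟨(D^ω(X))^*⟩` corresponding to a word `u ∈ T`. -/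
noncomputable def monoW (u : List (Letter J X)) : MonoidAlgebra k (FreeMonoid (Letter J X)) :=
  MonoidAlgebra.single (FreeMonoid.ofList u) 1

/-- Action of the derivation `D_j` on a word, defined by the Leibniz rule. -/
noncomputable def derivMon (j : J) : List (Letter J X) → MonoidAlgebra k (FreeMonoid (Letter J X))
  | [] => 0
  | (a, x) :: v =>
      monoW ((j :: a, x) :: v) + monoW [(a, x)] * derivMon j v

/-- The derivation `D_j` on the free differential algebra `D(X)`. -/
noncomputable def Dop (j : J) :
    MonoidAlgebra k (FreeMonoid (Letter J X)) →ₗ[k] MonoidAlgebra k (FreeMonoid (Letter J X)) :=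
  (Finsupp.lsum k fun (u : FreeMonoid (Letter J X)) =>
    LinearMap.toSpanSingleton k (MonoidAlgebra k (FreeMonoid (Letter J X))) (derivMon j u.toList)).comp
    (MonoidAlgebra.coeffLinearEquiv k).toLinearMap

/-- The composite operator `D^j̄ = D_{j₁} ∘ ⋯ ∘ D_{jₙ}`. -/
noncomputable def Dops (jb : List J) :
    MonoidAlgebra k (FreeMonoid (Letter J X)) →ₗ[k] MonoidAlgebra k (FreeMonoid (Letter J X)) :=
  jb.foldr (fun j m => (Dop j).comp m) LinearMap.id

/-- `d^j̄(u)`: prepend the operator word `j̄` to the first letter of `u`. -/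
def dHat (jb : List J) : List (Letter J X) → List (Letter J X)
  | [] => []
  | (a, x) :: v => (jb ++ a, x) :: v

/-- Coefficient of the word `u` in `f ∈ D(X)`. -/
noncomputable def coeffW (f : MonoidAlgebra k (FreeMonoid (Letter J X)))
    (u : List (Letter J X)) : k := f.coeff (FreeMonoid.ofList u)

section Order
variable [LinearOrder J] [LinearOrder X]

/-- The order on letters: compare `wt(D^ī(x)) = (x; m, i₁, …, i_m)` lexicographically. -/
def LetterLt (a b : Letter J X) : Prop :=
  a.2 < b.2 ∨ (a.2 = b.2 ∧ (a.1.length < b.1.length ∨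
    (a.1.length = b.1.length ∧ List.Lex (· < ·) a.1 b.1)))

/-- The deg-lex order on words: first by length, then lexicographically. -/
def DegLexLt (u v : List (Letter J X)) : Prop :=
  u.length < v.length ∨ (u.length = v.length ∧ List.Lex LetterLt u v)

/-- `u` is the leading term of `f`. -/
def IsLT (f : MonoidAlgebra k (FreeMonoid (Letter J X))) (u : List (Letter J X)) : Prop :=
  coeffW f u ≠ 0 ∧ ∀ v, coeffW f v ≠ 0 → v ≠ u → DegLexLt v u

/-- `f` is monic with leading term `u`. -/
def MonicW (f : MonoidAlgebra k (FreeMonoid (Letter J X))) (u : List (Letter J X)) : Prop :=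
  IsLT f u ∧ coeffW f u = 1

end Order

/-- Membership in the `D`-ideal generated by `S`. -/
inductive InDIdeal (S : Set (MonoidAlgebra k (FreeMonoid (Letter J X)))) :
    MonoidAlgebra k (FreeMonoid (Letter J X)) → Prop
  | of : ∀ s ∈ S, InDIdeal S s
  | zero : InDIdeal S 0
  | add : ∀ {a b}, InDIdeal S a → InDIdeal S b → InDIdeal S (a + b)
  | smul : ∀ (c : k) {a}, InDIdeal S a → InDIdeal S (c • a)
  | mul_left : ∀ (g) {a}, InDIdeal S a → InDIdeal S (g * a)
  | mul_right : ∀ (g) {a}, InDIdeal S a → InDIdeal S (a * g)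
  | deriv : ∀ (j : J) {a}, InDIdeal S a → InDIdeal S (Dop j a)

/-- `(S,𝒟)`-words: `a · D^j̄(s) · b` with `s ∈ S`. -/
def IsSDWord (S : Set (MonoidAlgebra k (FreeMonoid (Letter J X))))
    (g : MonoidAlgebra k (FreeMonoid (Letter J X))) : Prop :=
  ∃ (a b : List (Letter J X)) (jb : List J), ∃ s ∈ S, g = monoW a * Dops jb s * monoW b

section Order2
variable [LinearOrder J] [LinearOrder X]

/-- `f ≡ 0 mod (S, w)`: `f` is a linear combination of `(S,𝒟)`-words with leading term `< w`. -/
def TrivMod (S : Set (MonoidAlgebra k (FreeMonoid (Letter J X))))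
    (w : List (Letter J X)) (f : MonoidAlgebra k (FreeMonoid (Letter J X))) : Prop :=
  f ∈ Submodule.span k {g | IsSDWord S g ∧ ∃ l, IsLT g l ∧ DegLexLt l w}

/-- `S` is a Gröbner–Shirshov basis: all compositions of elements of `S` are trivial. -/
def IsGSB (S : Set (MonoidAlgebra k (FreeMonoid (Letter J X)))) : Prop :=
  ∀ f ∈ S, ∀ g ∈ S, ∀ fb gb, MonicW f fb → MonicW g gb →
    (∀ a b jb, gb ≠ [] → fb = a ++ dHat jb gb ++ b →
        TrivMod S fb (f - monoW a * Dops jb g * monoW b)) ∧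
    (∀ ib b, fb ≠ [] → dHat ib fb = gb ++ b →
        TrivMod S (dHat ib fb) (Dops ib f - g * monoW b)) ∧
    (∀ a b jb, a ≠ [] → b ≠ [] → fb ≠ [] → gb ≠ [] →
        fb ++ b = a ++ dHat jb gb → (fb ++ b).length < fb.length + gb.length →
        TrivMod S (fb ++ b) (f * monoW b - monoW a * Dops jb g))

/-- `Irr(S)`: words containing no subword `d^ī(s̄)` with `s ∈ S`. -/
def Irr (S : Set (MonoidAlgebra k (FreeMonoid (Letter J X)))) : Set (List (Letter J X)) :=
  {u | ¬ ∃ (a b : List (Letter J X)) (ib : List J), ∃ s ∈ S, ∃ sb, IsLT s sb ∧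
        u = a ++ dHat ib sb ++ b}

end Order2

/-- The `D`-ideal generated by `S`, as a `k`-submodule of `D(X)`. -/
noncomputable def DIdealSub (S : Set (MonoidAlgebra k (FreeMonoid (Letter J X)))) :
    Submodule k (MonoidAlgebra k (FreeMonoid (Letter J X))) where
  carrier := {f | InDIdeal S f}
  add_mem' := fun h1 h2 => InDIdeal.add h1 h2
  zero_mem' := InDIdeal.zero
  smul_mem' := fun c _ h => InDIdeal.smul c h

section Basic

theorem monoW_mul (u v : List (Letter J X)) :
    (monoW u * monoW v : MonoidAlgebra k (FreeMonoid (Letter J X))) = monoW (u ++ v) := by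
  simp [monoW, MonoidAlgebra.single_mul_single]

theorem monoW_nil : (monoW [] : MonoidAlgebra k (FreeMonoid (Letter J X))) = 1 := rfl

theorem coeffW_monoW_self (u : List (Letter J X)) :
    coeffW (monoW u : MonoidAlgebra k (FreeMonoid (Letter J X))) u = 1 := by
  simp [coeffW, monoW, MonoidAlgebra.single_apply]

theorem coeffW_monoW_ne {u v : List (Letter J X)} (h : v ≠ u) :
    coeffW (monoW u : MonoidAlgebra k (FreeMonoid (Letter J X))) v = 0 := by
  classical
  simp [coeffW, monoW, MonoidAlgebra.single_apply]
  exact Finsupp.single_eq_of_ne (fun h' => h (FreeMonoid.ofList.injective h'))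

end Basic
section Ins

/-- Insert operator `j` on the `i`-th letter. -/
def ins (j : J) : List (Letter J X) → ℕ → List (Letter J X)
  | [], _ => []
  | (a, x) :: v, 0 => (j :: a, x) :: v
  | l :: v, (i+1) => l :: ins j v i

@[simp] theorem ins_length (j : J) : ∀ (u : List (Letter J X)) (i : ℕ),
    (ins j u i).length = u.length
  | [], _ => rfl
  | (a, x) :: v, 0 => rfl
  | l :: v, (i+1) => by simp [ins, ins_length j v i]

theorem ins_cons_zero (j : J) (a : List J) (x : X) (v : List (Letter J X)) :
    ins j ((a, x) :: v) 0 = (j :: a, x) :: v := rfl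

theorem ins_cons_succ (j : J) (l : Letter J X) (v : List (Letter J X)) (i : ℕ) :
    ins j (l :: v) (i + 1) = l :: ins j v i := by
  obtain ⟨a, x⟩ := l; rfl

theorem ins_append_left (j : J) : ∀ (c d : List (Letter J X)) (i : ℕ), i < c.length →
    ins j (c ++ d) i = ins j c i ++ d
  | [], _, i, h => by simp at h
  | (a, x) :: v, d, 0, _ => rfl
  | (a, x) :: v, d, i + 1, h => by
    simp only [List.cons_append, ins_cons_succ]
    rw [ins_append_left j v d i (by simpa using h)]

theorem ins_append_right (j : J) : ∀ (c d : List (Letter J X)) (i : ℕ),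
    ins j (c ++ d) (c.length + i) = c ++ ins j d i
  | [], d, i => by simp
  | (a, x) :: v, d, i => by
    simp only [List.cons_append, List.length_cons]
    rw [show v.length + 1 + i = (v.length + i) + 1 by omega, ins_cons_succ]
    rw [ins_append_right j v d i]

theorem derivMon_eq (j : J) : ∀ (u : List (Letter J X)),
    (derivMon j u : MonoidAlgebra k (FreeMonoid (Letter J X)))
      = ∑ i ∈ Finset.range u.length, monoW (ins j u i)
  | [] => by simp [derivMon]
  | (a, x) :: v => by
    rw [derivMon, derivMon_eq j v, List.length_cons, Finset.sum_range_succ']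
    simp only [ins_cons_zero, ins_cons_succ, Finset.mul_sum, monoW_mul]
    rw [add_comm]
    congr 1

end Ins
section DopLemmas

theorem Dop_single (j : J) (u : FreeMonoid (Letter J X)) (c : k) :
    Dop j (MonoidAlgebra.single u c : MonoidAlgebra k (FreeMonoid (Letter J X)))
      = c • derivMon j u.toList := by
  have h : Dop j (MonoidAlgebra.single u c : MonoidAlgebra k (FreeMonoid (Letter J X)))
      = (Finsupp.single u c : FreeMonoid (Letter J X) →₀ k).sum
        fun v d => d • derivMon j v.toList := rfl
  rw [h, Finsupp.sum_single_index (by simp)]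

theorem Dop_monoW (j : J) (u : List (Letter J X)) :
    Dop j (monoW u : MonoidAlgebra k (FreeMonoid (Letter J X))) = derivMon j u := by
  rw [monoW, Dop_single]
  simp

theorem Dop_apply (j : J) (f : MonoidAlgebra k (FreeMonoid (Letter J X))) :
    Dop j f = f.coeff.sum fun u c => c • derivMon j u.toList := rfl

theorem derivMon_cons (j : J) (a : List J) (x : X) (v : List (Letter J X)) :
    (derivMon j ((a, x) :: v) : MonoidAlgebra k (FreeMonoid (Letter J X)))
      = monoW ((j :: a, x) :: v) + monoW [(a, x)] * derivMon j v := rfl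

theorem derivMon_append (j : J) : ∀ (u v : List (Letter J X)),
    (derivMon j (u ++ v) : MonoidAlgebra k (FreeMonoid (Letter J X)))
      = derivMon j u * monoW v + monoW u * derivMon j v
  | [], v => by simp [derivMon, monoW_nil]
  | (a, x) :: u, v => by
    rw [List.cons_append, derivMon_cons, derivMon_cons, derivMon_append j u v,
      show ((j :: a, x) :: (u ++ v)) = ((j :: a, x) :: u) ++ v from rfl, ← monoW_mul,
      show ((a, x) :: u) = [(a, x)] ++ u from rfl, ← monoW_mul]
    noncomm_ring

theorem Dop_mul (j : J) (f g : MonoidAlgebra k (FreeMonoid (Letter J X))) :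
    Dop j (f * g) = Dop j f * g + f * Dop j g := by
  induction f using MonoidAlgebra.induction_linear with
  | zero => simp
  | add f₁ f₂ hf₁ hf₂ => rw [add_mul, map_add, hf₁, hf₂, map_add, add_mul, add_mul]; abel
  | single u c =>
    induction g using MonoidAlgebra.induction_linear with
    | zero => simp
    | add g₁ g₂ hg₁ hg₂ => rw [mul_add, map_add, hg₁, hg₂, map_add, mul_add, mul_add]; abel
    | single v d =>
      have e1 : (MonoidAlgebra.single u c : MonoidAlgebra k (FreeMonoid (Letter J X)))
          = c • monoW u.toList := by
        rw [monoW, MonoidAlgebra.smul_single', mul_one]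
        rfl
      have e2 : (MonoidAlgebra.single v d : MonoidAlgebra k (FreeMonoid (Letter J X)))
          = d • monoW v.toList := by
        rw [monoW, MonoidAlgebra.smul_single', mul_one]
        rfl
      simp only [e1, e2, smul_mul_smul_comm, monoW_mul, map_smul, Dop_monoW,
        derivMon_append, smul_add]

@[simp] theorem Dops_nil :
    (Dops [] : MonoidAlgebra k (FreeMonoid (Letter J X)) →ₗ[k] _) = LinearMap.id := rfl

theorem Dops_cons (j : J) (jb : List J) (f : MonoidAlgebra k (FreeMonoid (Letter J X))) :
    Dops (j :: jb) f = Dop j (Dops jb f) := rfl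

theorem Dops_append (ib kb : List J) (f : MonoidAlgebra k (FreeMonoid (Letter J X))) :
    Dops (ib ++ kb) f = Dops ib (Dops kb f) := by
  induction ib with
  | nil => rfl
  | cons j ib ih => simp only [List.cons_append, Dops_cons, ih]

theorem Dop_one (j : J) : Dop j (1 : MonoidAlgebra k (FreeMonoid (Letter J X))) = 0 := by
  rw [← monoW_nil, Dop_monoW]; rfl

theorem Dops_one_of_ne {kb : List J} (h : kb ≠ []) :
    Dops kb (1 : MonoidAlgebra k (FreeMonoid (Letter J X))) = 0 := by
  induction kb with
  | nil => exact absurd rfl h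
  | cons j kb ih =>
    rcases eq_or_ne kb [] with rfl | hne
    · rw [Dops_cons]; simp [Dop_one]
    · rw [Dops_cons, ih hne, map_zero]

theorem sandwich_eq (a b : List (Letter J X)) (f : MonoidAlgebra k (FreeMonoid (Letter J X))) :
    monoW a * f * monoW b
      = MonoidAlgebra.ofCoeff
          (Finsupp.mapDomain (fun m => FreeMonoid.ofList a * m * FreeMonoid.ofList b) f.coeff) := by
  induction f using MonoidAlgebra.induction_linear with
  | zero => simp
  | add f₁ f₂ h₁ h₂ =>
    rw [mul_add, add_mul, h₁, h₂, MonoidAlgebra.coeff_add, Finsupp.mapDomain_add]; rfl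
  | single u c =>
    rw [MonoidAlgebra.coeff_single, Finsupp.mapDomain_single, monoW, monoW]
    rw [MonoidAlgebra.single_mul_single, MonoidAlgebra.single_mul_single]
    simp [MonoidAlgebra.ofCoeff_single]

theorem sandwich_inj (a b : List (Letter J X)) :
    Function.Injective
      (fun m : FreeMonoid (Letter J X) => FreeMonoid.ofList a * m * FreeMonoid.ofList b) := by
  intro m m' h
  apply FreeMonoid.toList.injective
  have h2 := congrArg FreeMonoid.toList h
  simp only [FreeMonoid.toList_mul, FreeMonoid.toList_ofList] at h2
  rw [List.append_assoc, List.append_assoc] at h2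
  exact List.append_cancel_right (List.append_cancel_left h2)

theorem coeffW_sandwich (a b v : List (Letter J X))
    (f : MonoidAlgebra k (FreeMonoid (Letter J X))) :
    coeffW (monoW a * f * monoW b) (a ++ v ++ b) = coeffW f v := by
  rw [sandwich_eq, coeffW, coeffW]
  have h : FreeMonoid.ofList (a ++ v ++ b)
      = FreeMonoid.ofList a * FreeMonoid.ofList v * FreeMonoid.ofList b := by
    simp [FreeMonoid.ofList_append, mul_assoc]
  rw [h]
  exact Finsupp.mapDomain_apply (sandwich_inj a b) f.coeff _

theorem supp_sandwich {a b : List (Letter J X)} {f : MonoidAlgebra k (FreeMonoid (Letter J X))}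
    {z : List (Letter J X)} (h : coeffW (monoW a * f * monoW b) z ≠ 0) :
    ∃ v, coeffW f v ≠ 0 ∧ z = a ++ v ++ b := by
  classical
  rw [sandwich_eq] at h
  have hz : FreeMonoid.ofList z ∈
      (Finsupp.mapDomain (fun m => FreeMonoid.ofList a * m * FreeMonoid.ofList b) f.coeff).support :=
    Finsupp.mem_support_iff.mpr h
  have h3 := Finsupp.mapDomain_support hz
  simp only [Finset.mem_image, Finsupp.mem_support_iff] at h3
  obtain ⟨m, hm, hmz⟩ := h3
  refine ⟨m.toList, by simpa [coeffW] using hm, ?_⟩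
  have h4 := congrArg FreeMonoid.toList hmz
  simp only [FreeMonoid.toList_mul, FreeMonoid.toList_ofList] at h4
  exact h4.symm

end DopLemmas
section DHat

theorem dHat_cons (ib : List J) (a : List J) (x : X) (v : List (Letter J X)) :
    dHat ib ((a, x) :: v) = (ib ++ a, x) :: v := rfl

theorem dHat_nil_idx : ∀ u : List (Letter J X), dHat ([] : List J) u = u
  | [] => rfl
  | (a, x) :: v => rfl

@[simp] theorem dHat_length (ib : List J) : ∀ u : List (Letter J X),
    (dHat ib u).length = u.length
  | [] => rfl
  | (a, x) :: v => rfl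

theorem dHat_dHat (ia ic : List J) : ∀ u : List (Letter J X),
    dHat ia (dHat ic u) = dHat (ia ++ ic) u
  | [] => rfl
  | (a, x) :: v => by simp [dHat_cons]

theorem dHat_append (ib : List J) {u : List (Letter J X)} (v : List (Letter J X))
    (h : u ≠ []) : dHat ib (u ++ v) = dHat ib u ++ v := by
  match u with
  | [] => exact absurd rfl h
  | (a, x) :: u => rfl

theorem dHat_ne_nil (ib : List J) {u : List (Letter J X)} (h : u ≠ []) :
    dHat ib u ≠ [] := by
  match u with
  | [] => exact absurd rfl h
  | (a, x) :: u => simp [dHat_cons]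

theorem ins_zero_eq_dHat (j : J) {u : List (Letter J X)} (h : u ≠ []) :
    ins j u 0 = dHat [j] u := by
  match u with
  | [] => exact absurd rfl h
  | (a, x) :: u => rfl

end DHat

section OrderLemmas
variable [LinearOrder J] [LinearOrder X]

theorem lex_prepend {α : Type*} {r : α → α → Prop} {l₁ l₂ : List α} (p : List α)
    (h : List.Lex r l₁ l₂) : List.Lex r (p ++ l₁) (p ++ l₂) := by
  induction p with
  | nil => exact h
  | cons a p ih => exact List.Lex.cons ih

theorem lex_append_right {α : Type*} {r : α → α → Prop} :
    ∀ {l₁ l₂ : List α}, l₁.length = l₂.length → List.Lex r l₁ l₂ →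
      ∀ (b₁ b₂ : List α), List.Lex r (l₁ ++ b₁) (l₂ ++ b₂) := by
  intro l₁ l₂ hlen h
  induction h with
  | nil => simp at hlen
  | @rel a l₁ b l₂ hab => intro b₁ b₂; exact List.Lex.rel hab
  | @cons a l₁ l₂ h ih =>
    intro b₁ b₂
    exact List.Lex.cons (ih (by simpa using hlen) b₁ b₂)

theorem lex_asymm {α : Type*} {r : α → α → Prop}
    (hr : ∀ a b, r a b → r b a → False) :
    ∀ {l₁ l₂ : List α}, List.Lex r l₁ l₂ → List.Lex r l₂ l₁ → False := by
  intro l₁ l₂ h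
  induction h with
  | nil => intro h2; cases h2
  | @rel a l₁ b l₂ hab =>
    intro h2
    cases h2 with
    | rel hba => exact hr _ _ hab hba
    | cons _ => exact hr _ _ hab hab
  | @cons a l₁ l₂ h ih =>
    intro h2
    cases h2 with
    | rel hba => exact hr _ _ hba hba
    | cons h3 => exact ih h3

theorem letterLt_asymm {a b : Letter J X} (h : LetterLt a b) (h2 : LetterLt b a) : False := by
  obtain ⟨a1, a2⟩ := a; obtain ⟨b1, b2⟩ := b
  rcases h with h | ⟨he, h⟩
  · rcases h2 with h2 | ⟨he2, _⟩
    · exact absurd h2 (not_lt.mpr h.le)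
    · exact absurd (he2 ▸ h) (lt_irrefl _)
  · rcases h2 with h2 | ⟨he2, h2⟩
    · exact absurd (he ▸ h2) (lt_irrefl _)
    · rcases h with h | ⟨hl, h⟩
      · rcases h2 with h2 | ⟨hl2, _⟩
        · omega
        · omega
      · rcases h2 with h2 | ⟨hl2, h2⟩
        · omega
        · exact lex_asymm (fun a b h1 h2 => absurd h1 (not_lt.mpr h2.le)) h h2

theorem degLexLt_asymm {u v : List (Letter J X)} (h : DegLexLt u v) (h2 : DegLexLt v u) :
    False := by
  rcases h with h | ⟨he, h⟩ <;> rcases h2 with h2 | ⟨he2, h2⟩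
  · omega
  · omega
  · omega
  · exact lex_asymm (fun _ _ ha hb => letterLt_asymm ha hb) h h2

theorem degLexLt_irrefl {u : List (Letter J X)} (h : DegLexLt u u) : False :=
  degLexLt_asymm h h

theorem isLT_unique {f : MonoidAlgebra k (FreeMonoid (Letter J X))} {l l' : List (Letter J X)}
    (h : IsLT f l) (h' : IsLT f l') : l = l' := by
  by_contra hne
  exact degLexLt_asymm (h'.2 l h.1 hne) (h.2 l' h'.1 (Ne.symm hne))

/-- Deg-lex order is compatible with multiplication by words. -/
theorem degLex_sandwich {u v : List (Letter J X)} (a b : List (Letter J X))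
    (h : DegLexLt u v) : DegLexLt (a ++ u ++ b) (a ++ v ++ b) := by
  rcases h with h | ⟨he, h⟩
  · left; simp; omega
  · right
    constructor
    · simp [he]
    · rw [List.append_assoc, List.append_assoc]
      exact lex_prepend a (lex_append_right he h b b)

theorem letterLt_of_letterLt {c ib : List J} (hs : c.Sublist ib)
    {a a' : List J} {x x' : X} (h : LetterLt (a, x) (a', x')) :
    LetterLt (c ++ a, x) (ib ++ a', x') := by
  have hlen : c.length ≤ ib.length := hs.length_le
  rcases h with h | ⟨he, h⟩
  · exact Or.inl h
  · refine Or.inr ⟨he, ?_⟩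
    rcases h with h | ⟨hl, h⟩
    · have h' : a.length < a'.length := by simpa using h
      left; simp; omega
    · have hl' : a.length = a'.length := by simpa using hl
      have h' : List.Lex (· < ·) a a' := by simpa using h
      rcases lt_or_eq_of_le hlen with hc | hc
      · left; simp; omega
      · right
        have hcib : c = ib := hs.eq_of_length hc
        subst hcib
        exact ⟨by simp [hl'], lex_prepend c h'⟩

theorem letterLt_of_length_lt {c ib : List J} (h : c.length < ib.length)
    (a : List J) (x : X) : LetterLt (c ++ a, x) (ib ++ a, x) := by
  refine Or.inr ⟨rfl, Or.inl ?_⟩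
  simp; omega

end OrderLemmas
section Scatter

/-- One application of `D_j` sends the monomial `u` to monomials `OneStep j u ·`. -/
def OneStep (j : J) (u t : List (Letter J X)) : Prop := ∃ i, i < u.length ∧ t = ins j u i

/-- Monomials appearing in `D^il(u)`. -/
inductive Scatter : List J → List (Letter J X) → List (Letter J X) → Prop
  | nil (u) : Scatter [] u u
  | cons {j il u t t'} : Scatter il u t → OneStep j t t' → Scatter (j :: il) u t'

theorem oneStep_length {j : J} {u t : List (Letter J X)} (h : OneStep j u t) :
    t.length = u.length := by
  obtain ⟨i, _, rfl⟩ := h; simp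

theorem scatter_length {il : List J} {u t : List (Letter J X)} (h : Scatter il u t) :
    t.length = u.length := by
  induction h with
  | nil => rfl
  | cons _ h2 ih => rw [oneStep_length h2, ih]

theorem scatter_nil_inv {u t : List (Letter J X)} (h : Scatter [] u t) : t = u := by
  cases h; rfl

theorem scatter_split {il : List J} {u t : List (Letter J X)} (h : Scatter il u t) :
    ∀ (a : List J) (x : X) (u' : List (Letter J X)), u = (a, x) :: u' →
    ∃ (c d : List J) (t' : List (Letter J X)), c.Sublist il ∧ d.Sublist il ∧
      c.length + d.length = il.length ∧ t = (c ++ a, x) :: t' ∧ Scatter d u' t' := by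
  induction h with
  | nil u =>
    rintro a x u' rfl
    exact ⟨[], [], u', List.nil_sublist _, List.nil_sublist _, rfl, rfl, Scatter.nil u'⟩
  | @cons j il u t t' hsc hone ih =>
    rintro a x u' rfl
    obtain ⟨c, d, t₀, hc, hd, hlen, rfl, hsc'⟩ := ih a x u' rfl
    obtain ⟨i, hi, rfl⟩ := hone
    match i with
    | 0 =>
      refine ⟨j :: c, d, t₀, List.Sublist.cons₂ j hc, List.Sublist.cons j hd, by simp [← hlen]; omega, ?_, hsc'⟩
      rfl
    | i + 1 =>
      rw [ins_cons_succ]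
      refine ⟨c, j :: d, ins j t₀ i, List.Sublist.cons j hc, List.Sublist.cons₂ j hd,
        by simp [← hlen]; omega, rfl, ?_⟩
      exact Scatter.cons hsc' ⟨i, by simpa using hi, rfl⟩

end Scatter

section Cmp
variable [LinearOrder J] [LinearOrder X]

theorem scatter_cmp : ∀ (u : List (Letter J X)) {t : List (Letter J X)} {il : List J}
    {v : List (Letter J X)}, Scatter il u t → (u = v ∨ DegLexLt u v) → u.length = v.length →
    (t = dHat il v ∧ u = v) ∨ DegLexLt t (dHat il v)
  | [], t, il, v, hsc, _, hlen => by
    have hv : v = [] := by cases v <;> simp_all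
    subst hv
    have ht : t = [] := by have := scatter_length hsc; cases t <;> simp_all
    exact Or.inl ⟨by rw [ht]; rfl, rfl⟩
  | (a, x) :: u', t, il, v, hsc, hle, hlen => by
    match v, hlen with
    | (a', x') :: v', hlen =>
      obtain ⟨c, d, t', hc, hd, hlencd, rfl, hsc'⟩ := scatter_split hsc a x u' rfl
      have hlent' : t'.length = u'.length := scatter_length hsc'
      have hlen' : u'.length = v'.length := by simpa using hlen
      have hcase : ((a, x) = (a', x') ∧ (u' = v' ∨ List.Lex LetterLt u' v'))
          ∨ LetterLt (a, x) (a', x') := by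
        rcases hle with he | hlt
        · obtain ⟨h1, h2⟩ := List.cons.injEq .. ▸ he
          exact Or.inl ⟨by simp_all, Or.inl (by simp_all)⟩
        · rcases hlt with h | ⟨_, h⟩
          · exact absurd h (by simp [hlen'])
          · cases h with
            | rel hr => exact Or.inr hr
            | cons hl => exact Or.inl ⟨rfl, Or.inr hl⟩
      have hlentot : ((c ++ a, x) :: t').length = (dHat il ((a', x') :: v')).length := by
        simp [hlent', hlen']
      rcases hcase with ⟨he, htail⟩ | hhead
      · obtain ⟨rfl, rfl⟩ : a = a' ∧ x = x' := by
          constructor <;> · injection he with h1 h2 <;> simp_all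
        rcases lt_or_eq_of_le hc.length_le with hlt | heq
        · right
          refine Or.inr ⟨hlentot, ?_⟩
          rw [dHat_cons]
          exact List.Lex.rel (letterLt_of_length_lt hlt a x)
        · have hcil : c = il := hc.eq_of_length heq
          subst hcil
          have hd0 : d = [] := by
            have : d.length = 0 := by omega
            simpa [List.length_eq_zero_iff] using this
          subst hd0
          have ht' : t' = u' := scatter_nil_inv hsc'
          subst ht'
          rcases htail with rfl | hlex
          · exact Or.inl ⟨rfl, rfl⟩
          · right
            exact Or.inr ⟨hlentot, by rw [dHat_cons]; exact List.Lex.cons hlex⟩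
      · right
        refine Or.inr ⟨hlentot, ?_⟩
        rw [dHat_cons]
        exact List.Lex.rel (letterLt_of_letterLt hc hhead)

end Cmp
section CoeffMachinery

theorem finsupp_sum_def {γ β M : Type*} [Zero β] [AddCommMonoid M] (f : γ →₀ β)
    (g : γ → β → M) : f.sum g = ∑ a ∈ f.support, g a (f a) := rfl

theorem single_eq_smul_monoW (u : FreeMonoid (Letter J X)) (c : k) :
    (MonoidAlgebra.single u c : MonoidAlgebra k (FreeMonoid (Letter J X)))
      = c • monoW u.toList := by
  rw [monoW, MonoidAlgebra.smul_single', mul_one]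
  rfl

theorem coeffW_sum {γ : Type*} (s : Finset γ)
    (F : γ → MonoidAlgebra k (FreeMonoid (Letter J X))) (z : List (Letter J X)) :
    coeffW (∑ i ∈ s, F i) z = ∑ i ∈ s, coeffW (F i) z :=
  by rw [coeffW, MonoidAlgebra.coeff_sum]; exact Finsupp.finset_sum_apply s _ _

theorem coeffW_Dop (j : J) (f : MonoidAlgebra k (FreeMonoid (Letter J X)))
    (z : List (Letter J X)) :
    coeffW (Dop j f) z = f.coeff.sum fun t c => c * coeffW (derivMon j t.toList) z := by
  rw [Dop_apply, coeffW, MonoidAlgebra.coeff_finsuppSum, Finsupp.sum_apply]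
  exact Finset.sum_congr rfl fun t _ => rfl

theorem coeff_derivMon_ne {j : J} {u z : List (Letter J X)}
    (h : coeffW (derivMon j u : MonoidAlgebra k (FreeMonoid (Letter J X))) z ≠ 0) :
    OneStep j u z := by
  rw [derivMon_eq, coeffW_sum] at h
  obtain ⟨i, hi, hne⟩ := Finset.exists_ne_zero_of_sum_ne_zero h
  refine ⟨i, by simpa using hi, ?_⟩
  by_contra hz
  exact hne (coeffW_monoW_ne hz)

theorem supp_Dops_scatter : ∀ (il : List J) {u z : List (Letter J X)},
    coeffW (Dops il (monoW u) : MonoidAlgebra k (FreeMonoid (Letter J X))) z ≠ 0 →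
    Scatter il u z
  | [], u, z, h => by
    have : z = u := by
      by_contra hz
      exact h (by simpa using coeffW_monoW_ne hz)
    exact this ▸ Scatter.nil u
  | j :: il, u, z, h => by
    rw [Dops_cons, coeffW_Dop, finsupp_sum_def] at h
    obtain ⟨t, ht, hne⟩ := Finset.exists_ne_zero_of_sum_ne_zero h
    have h1 : coeffW (Dops il (monoW u) : MonoidAlgebra k (FreeMonoid (Letter J X))) t.toList ≠ 0 := by
      have := Finsupp.mem_support_iff.mp ht
      simpa [coeffW, FreeMonoid.ofList_toList] using this
    have h2 : coeffW (derivMon j t.toList : MonoidAlgebra k (FreeMonoid (Letter J X))) z ≠ 0 := by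
      intro hc
      exact hne (by rw [hc, mul_zero])
    exact Scatter.cons (supp_Dops_scatter il h1) (coeff_derivMon_ne h2)

theorem ins_ne_dHat (j : J) : ∀ {w : List (Letter J X)}, w ≠ [] → ∀ {i : ℕ}, i ≠ 0 →
    ins j w i ≠ dHat [j] w := by
  intro w hw i hi
  match w, i with
  | [], _ => exact absurd rfl hw
  | (a, x) :: r, 0 => exact absurd rfl hi
  | (a, x) :: r, i + 1 =>
    rw [ins_cons_succ, dHat_cons]
    intro hcon
    have := (List.cons.injEq .. ▸ hcon).1
    have : a = j :: a := by
      have h2 := congrArg Prod.fst this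
      simpa using h2
    exact absurd (congrArg List.length this) (by simp)

end CoeffMachinery

section MonicLemmas
variable [LinearOrder J] [LinearOrder X]

theorem coeff_Dops_top : ∀ (il : List J) {u : List (Letter J X)}, u ≠ [] →
    coeffW (Dops il (monoW u) : MonoidAlgebra k (FreeMonoid (Letter J X))) (dHat il u) = 1
  | [], u, hu => by rw [dHat_nil_idx]; simpa using coeffW_monoW_self u
  | j :: il, u, hu => by
    rw [Dops_cons, coeffW_Dop, finsupp_sum_def]
    rw [Finset.sum_eq_single (FreeMonoid.ofList (dHat il u))]
    · have htop : (Dops il (monoW u) : MonoidAlgebra k (FreeMonoid (Letter J X))).coeff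
          (FreeMonoid.ofList (dHat il u)) = 1 := coeff_Dops_top il hu
      rw [htop, one_mul]
      have hne : dHat il u ≠ [] := dHat_ne_nil il hu
      have hlen0 : 0 < (dHat il u).length := List.length_pos_iff.mpr hne
      rw [show (FreeMonoid.ofList (dHat il u)).toList = dHat il u from rfl]
      rw [derivMon_eq, coeffW_sum]
      rw [Finset.sum_eq_single_of_mem 0 (Finset.mem_range.mpr hlen0)]
      · rw [ins_zero_eq_dHat j hne, dHat_dHat]
        exact coeffW_monoW_self _
      · intro i _ hi0
        apply coeffW_monoW_ne
        intro hcon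
        exact ins_ne_dHat j hne hi0 (by rw [dHat_dHat]; exact hcon.symm)
    · intro b hb hbne
      have hbt : coeffW (Dops il (monoW u) : MonoidAlgebra k (FreeMonoid (Letter J X)))
          b.toList ≠ 0 := by
        have := Finsupp.mem_support_iff.mp hb
        simpa [coeffW, FreeMonoid.ofList_toList] using this
      have hsc : Scatter il u b.toList := supp_Dops_scatter il hbt
      have hbne' : b.toList ≠ dHat il u := by
        intro hcon
        exact hbne (by rw [← hcon]; simp [FreeMonoid.ofList_toList])
      have hlt : DegLexLt b.toList (dHat il u) := by
        rcases scatter_cmp u hsc (Or.inl rfl) rfl with ⟨heq, _⟩ | hlt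
        · exact absurd heq hbne'
        · exact hlt
      have hzero : coeffW (derivMon j b.toList : MonoidAlgebra k (FreeMonoid (Letter J X)))
          (dHat (j :: il) u) = 0 := by
        by_contra hcon
        have hone : OneStep j b.toList (dHat (j :: il) u) := coeff_derivMon_ne hcon
        have hsc2 : Scatter [j] b.toList (dHat (j :: il) u) :=
          Scatter.cons (Scatter.nil _) hone
        have hlenb : b.toList.length = (dHat il u).length := by
          rw [scatter_length hsc]; simp
        rcases scatter_cmp b.toList hsc2 (Or.inr hlt) hlenb with ⟨heq, h2⟩ | hlt2
        · exact hbne' h2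
        · rw [dHat_dHat] at hlt2
          exact degLexLt_irrefl hlt2
      rw [hzero, mul_zero]
    · intro hnot
      rw [Finsupp.notMem_support_iff.mp hnot, zero_mul]

theorem coeffW_Dops (il : List J) (f : MonoidAlgebra k (FreeMonoid (Letter J X)))
    (z : List (Letter J X)) :
    coeffW (Dops il f) z = f.coeff.sum fun u c =>
      c * coeffW (Dops il (monoW u.toList) : MonoidAlgebra k (FreeMonoid (Letter J X))) z := by
  have hrep : Dops il f = f.coeff.sum fun u c => c • Dops il (monoW u.toList) := by
    conv_lhs => rw [← MonoidAlgebra.sum_coeff_single f]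
    rw [map_finsuppSum]
    exact Finsupp.sum_congr fun u _ => by rw [single_eq_smul_monoW, map_smul]
  rw [hrep, coeffW, MonoidAlgebra.coeff_finsuppSum, Finsupp.sum_apply]
  exact Finset.sum_congr rfl fun t _ => rfl

theorem monic_Dops {s : MonoidAlgebra k (FreeMonoid (Letter J X))} {sb : List (Letter J X)}
    (hm : MonicW s sb) (hsb : sb ≠ []) (il : List J) :
    MonicW (Dops il s) (dHat il sb) := by
  have hcoefftop : coeffW (Dops il s) (dHat il sb) = 1 := by
    rw [coeffW_Dops, finsupp_sum_def]
    rw [Finset.sum_eq_single (FreeMonoid.ofList sb)]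
    · rw [show (FreeMonoid.ofList sb).toList = sb from rfl, coeff_Dops_top il hsb]
      have : s.coeff (FreeMonoid.ofList sb) = 1 := hm.2
      rw [this, one_mul]
    · intro b hb hbne
      have hbcoeff : coeffW s b.toList ≠ 0 := by
        have := Finsupp.mem_support_iff.mp hb
        simpa [coeffW, FreeMonoid.ofList_toList] using this
      have hbne' : b.toList ≠ sb := by
        intro hcon; exact hbne (by rw [← hcon]; simp [FreeMonoid.ofList_toList])
      have hblt : DegLexLt b.toList sb := hm.1.2 b.toList hbcoeff hbne'
      have hzero : coeffW (Dops il (monoW b.toList) : MonoidAlgebra k (FreeMonoid (Letter J X)))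
          (dHat il sb) = 0 := by
        by_contra hcon
        have hsc : Scatter il b.toList (dHat il sb) := supp_Dops_scatter il hcon
        by_cases hlen : b.toList.length = sb.length
        · rcases scatter_cmp b.toList hsc (Or.inr hblt) hlen with ⟨_, heq⟩ | hlt2
          · exact hbne' heq
          · exact degLexLt_irrefl hlt2
        · have h1 : (dHat il sb).length = b.toList.length := scatter_length hsc
          rw [dHat_length] at h1
          exact hlen h1.symm
      rw [hzero, mul_zero]
    · intro hnot
      rw [Finsupp.notMem_support_iff.mp hnot, zero_mul]
  have hlt : ∀ z, coeffW (Dops il s) z ≠ 0 → z ≠ dHat il sb → DegLexLt z (dHat il sb) := by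
    intro z hz hzne
    rw [coeffW_Dops, finsupp_sum_def] at hz
    obtain ⟨b, hb, hbne⟩ := Finset.exists_ne_zero_of_sum_ne_zero hz
    have hbcoeff : coeffW s b.toList ≠ 0 := by
      have := Finsupp.mem_support_iff.mp hb
      simpa [coeffW, FreeMonoid.ofList_toList] using this
    have hcoeffz : coeffW (Dops il (monoW b.toList) : MonoidAlgebra k (FreeMonoid (Letter J X)))
        z ≠ 0 := fun hc => hbne (by rw [hc, mul_zero])
    have hsc : Scatter il b.toList z := supp_Dops_scatter il hcoeffz
    have hble : b.toList = sb ∨ DegLexLt b.toList sb := by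
      by_cases hbe : b.toList = sb
      · exact Or.inl hbe
      · exact Or.inr (hm.1.2 b.toList hbcoeff hbe)
    by_cases hlen : b.toList.length = sb.length
    · rcases scatter_cmp b.toList hsc hble hlen with ⟨heq, _⟩ | hlt2
      · exact absurd heq hzne
      · exact hlt2
    · left
      rw [scatter_length hsc, dHat_length]
      rcases hble with hbe | hblt
      · exact absurd (congrArg List.length hbe) hlen
      · rcases hblt with h | ⟨h, _⟩
        · exact h
        · exact absurd h hlen
  have hne0 : (1 : k) ≠ 0 := by
    intro h10
    exact hm.1.1 (by rw [hm.2, h10])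
  exact ⟨⟨by rw [hcoefftop]; exact hne0, hlt⟩, hcoefftop⟩

theorem isLT_sandwich {f : MonoidAlgebra k (FreeMonoid (Letter J X))} {u : List (Letter J X)}
    (h : IsLT f u) (a b : List (Letter J X)) :
    IsLT (monoW a * f * monoW b) (a ++ u ++ b) := by
  constructor
  · rw [coeffW_sandwich]; exact h.1
  · intro z hz hzne
    obtain ⟨v, hv, rfl⟩ := supp_sandwich hz
    have hvne : v ≠ u := by
      intro hcon; exact hzne (by rw [hcon])
    exact degLex_sandwich a b (h.2 v hv hvne)

theorem monicW_sandwich {f : MonoidAlgebra k (FreeMonoid (Letter J X))} {u : List (Letter J X)}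
    (h : MonicW f u) (a b : List (Letter J X)) :
    MonicW (monoW a * f * monoW b) (a ++ u ++ b) :=
  ⟨isLT_sandwich h.1 a b, by rw [coeffW_sandwich]; exact h.2⟩

theorem degLexLt_nil {v : List (Letter J X)} : ¬ DegLexLt v [] := by
  rintro (h | ⟨h, hlex⟩)
  · simp at h
  · cases hlex

theorem monicW_nil_eq_one {s : MonoidAlgebra k (FreeMonoid (Letter J X))}
    (h : MonicW s []) : s = 1 := by
  ext z
  rw [MonoidAlgebra.one_def]
  by_cases hz : z = (1 : FreeMonoid (Letter J X))
  · subst hz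
    have h2 : (MonoidAlgebra.single (1 : FreeMonoid (Letter J X)) (1 : k)).coeff 1 = 1 := by
      simp [MonoidAlgebra.single_apply]
    rw [h2]
    exact h.2
  · have hzl : z.toList ≠ [] := by
      intro hc
      exact hz (by rw [← FreeMonoid.ofList_toList z, hc]; rfl)
    have hc0 : coeffW s z.toList = 0 := by
      by_contra hc
      exact degLexLt_nil (h.1.2 z.toList hc hzl)
    have hz0 : s.coeff z = 0 := by simpa [coeffW, FreeMonoid.ofList_toList] using hc0
    rw [hz0]
    exact (Finsupp.single_eq_of_ne' (M := k) (Ne.symm hz)).symm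

end MonicLemmas
section SpanMachinery
variable [LinearOrder J] [LinearOrder X]
variable {S : Set (MonoidAlgebra k (FreeMonoid (Letter J X)))}

/-- The set of `(S,𝒟)`-words with leading term `< w`. -/
def SDW (S : Set (MonoidAlgebra k (FreeMonoid (Letter J X)))) (w : List (Letter J X)) :
    Set (MonoidAlgebra k (FreeMonoid (Letter J X))) :=
  {g | IsSDWord S g ∧ ∃ l, IsLT g l ∧ DegLexLt l w}

theorem trivMod_iff {w : List (Letter J X)} {f : MonoidAlgebra k (FreeMonoid (Letter J X))} :
    TrivMod S w f ↔ f ∈ Submodule.span k (SDW S w) := Iff.rfl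

theorem oneStep_lt {j : J} {l v t : List (Letter J X)} (hlv : DegLexLt l v)
    (hone : OneStep j l t) : DegLexLt t (dHat [j] v) := by
  by_cases hlen : l.length = v.length
  · rcases scatter_cmp l (Scatter.cons (Scatter.nil l) hone) (Or.inr hlv) hlen with ⟨_, heq⟩ | h
    · subst heq; exact absurd hlv degLexLt_irrefl
    · exact h
  · have hl2 : l.length < v.length := by
      rcases hlv with h | ⟨h, _⟩
      · exact h
      · exact absurd h hlen
    left
    rw [oneStep_length hone, dHat_length]
    exact hl2

theorem degLex_append_right {t T : List (Letter J X)} (z : List (Letter J X))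
    (h : DegLexLt t T) : DegLexLt (t ++ z) (T ++ z) := by
  have := degLex_sandwich ([] : List (Letter J X)) z h
  simpa using this

theorem degLex_head_len' {A B : List J} (h : A.length < B.length) {e : List (Letter J X)}
    (he : e ≠ []) {z z' : List (Letter J X)} (hlen : z.length = z'.length) :
    DegLexLt (dHat A e ++ z) (dHat B e ++ z') := by
  match e with
  | [] => exact absurd rfl he
  | (a, x) :: r =>
    rw [dHat_cons, dHat_cons]
    refine Or.inr ⟨by simp [hlen], ?_⟩
    exact List.Lex.rel (letterLt_of_length_lt h a x)

/-- Transport of spans by sandwiching with monomials. -/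
theorem span_sandwich {v : List (Letter J X)} {f : MonoidAlgebra k (FreeMonoid (Letter J X))}
    (a b : List (Letter J X)) (h : f ∈ Submodule.span k (SDW S v)) :
    monoW a * f * monoW b ∈ Submodule.span k (SDW S (a ++ v ++ b)) := by
  let L : MonoidAlgebra k (FreeMonoid (Letter J X)) →ₗ[k] MonoidAlgebra k (FreeMonoid (Letter J X)) :=
    (LinearMap.mulRight k (monoW b)).comp (LinearMap.mulLeft k (monoW a))
  have hL : monoW a * f * monoW b = L f := rfl
  rw [hL]
  have hmap : L f ∈ Submodule.map L (Submodule.span k (SDW S v)) := ⟨f, h, rfl⟩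
  rw [Submodule.map_span] at hmap
  refine Submodule.span_le.mpr ?_ hmap
  rintro g ⟨g₀, ⟨⟨c, d, kb, s, hs, rfl⟩, ⟨l, hl, hlv⟩⟩, rfl⟩
  apply Submodule.subset_span
  constructor
  · refine ⟨a ++ c, d ++ b, kb, s, hs, ?_⟩
    show monoW a * (monoW c * Dops kb s * monoW d) * monoW b = _
    rw [← monoW_mul, ← monoW_mul]
    noncomm_ring
  · refine ⟨a ++ l ++ b, ?_, degLex_sandwich a b hlv⟩
    exact isLT_sandwich hl a b

/-- Transport of spans by `D_j`. -/
theorem span_Dop (hS : ∀ s ∈ S, ∃ sb, MonicW s sb) (j : J) {v : List (Letter J X)}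
    {f : MonoidAlgebra k (FreeMonoid (Letter J X))} (h : f ∈ Submodule.span k (SDW S v)) :
    Dop j f ∈ Submodule.span k (SDW S (dHat [j] v)) := by
  have hmap : Dop j f ∈ Submodule.map (Dop j) (Submodule.span k (SDW S v)) := ⟨f, h, rfl⟩
  rw [Submodule.map_span] at hmap
  refine Submodule.span_le.mpr ?_ hmap
  rintro g' ⟨g, ⟨⟨c, d, kb, s, hs, rfl⟩, ⟨l, hl, hlv⟩⟩, rfl⟩
  obtain ⟨sb, hmon⟩ := hS s hs
  by_cases hsb : sb = []
  · -- degenerate case : s = 1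
    subst hsb
    have hs1 : s = 1 := monicW_nil_eq_one hmon
    by_cases hkb : kb = []
    · subst hkb
      have hg : monoW c * Dops [] s * monoW d = monoW (c ++ d) := by
        rw [hs1]; show monoW c * LinearMap.id (1 : MonoidAlgebra k (FreeMonoid (Letter J X))) * monoW d = _
        rw [LinearMap.id_apply, mul_one, monoW_mul]
      rw [hg, Dop_monoW, derivMon_eq]
      have hlcd : l = c ++ d := by
        by_contra hne
        exact hl.1 (by rw [hg] at hl ⊢; exact coeffW_monoW_ne hne)
      apply Submodule.sum_mem
      intro i hi
      apply Submodule.subset_span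
      constructor
      · refine ⟨ins j (c ++ d) i, [], [], s, hs, ?_⟩
        rw [hs1]
        show monoW (ins j (c ++ d) i) = monoW (ins j (c ++ d) i) * LinearMap.id (1 : MonoidAlgebra k (FreeMonoid (Letter J X))) * monoW []
        rw [LinearMap.id_apply, mul_one, monoW_nil, mul_one]
      · refine ⟨ins j (c ++ d) i, ?_, ?_⟩
        · constructor
          · rw [coeffW_monoW_self]
            intro h10
            exact hl.1 (by rw [hg] at hl ⊢; rw [hlcd, coeffW_monoW_self]; exact h10)
          · intro z hz hzne
            exact absurd (coeffW_monoW_ne hzne) hz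
        · exact oneStep_lt (hlcd ▸ hlv) ⟨i, by simpa using hi, rfl⟩
    · have hg : monoW c * Dops kb s * monoW d = 0 := by
        rw [hs1, Dops_one_of_ne hkb, mul_zero, zero_mul]
      rw [hg, map_zero]
      exact Submodule.zero_mem _
  · -- main case
    have hLT : IsLT (monoW c * Dops kb s * monoW d) (c ++ dHat kb sb ++ d) :=
      isLT_sandwich (monic_Dops hmon hsb kb).1 c d
    have hleq : l = c ++ dHat kb sb ++ d := isLT_unique hl hLT
    subst hleq
    have hexp : Dop j (monoW c * Dops kb s * monoW d)
        = derivMon j c * Dops kb s * monoW d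
          + monoW c * Dops (j :: kb) s * monoW d
          + monoW c * Dops kb s * derivMon j d := by
      rw [Dop_mul, Dop_mul, Dop_monoW, Dop_monoW, ← Dops_cons]
      noncomm_ring
    rw [hexp]
    have hsbne : dHat kb sb ≠ [] := dHat_ne_nil kb hsb
    refine Submodule.add_mem _ (Submodule.add_mem _ ?_ ?_) ?_
    · -- first summand
      rw [derivMon_eq]
      rw [Finset.sum_mul, Finset.sum_mul]
      apply Submodule.sum_mem
      intro i hi
      have hi' : i < c.length := by simpa using hi
      apply Submodule.subset_span
      refine ⟨⟨ins j c i, d, kb, s, hs, rfl⟩, ins j c i ++ dHat kb sb ++ d,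
        isLT_sandwich (monic_Dops hmon hsb kb).1 _ d, ?_⟩
      apply oneStep_lt hlv
      refine ⟨i, by simp; omega, ?_⟩
      simp only [List.append_assoc]
      rw [ins_append_left j c _ i hi']
    · -- middle summand
      apply Submodule.subset_span
      refine ⟨⟨c, d, j :: kb, s, hs, rfl⟩, c ++ dHat (j :: kb) sb ++ d,
        isLT_sandwich (monic_Dops hmon hsb (j :: kb)).1 c d, ?_⟩
      apply oneStep_lt hlv
      refine ⟨c.length, by simp [List.length_pos_iff.mpr hsb], ?_⟩
      have hne2 : dHat kb sb ++ d ≠ [] := by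
        intro hc
        exact hsbne (List.append_eq_nil_iff.mp hc).1
      have h2 : ins j (c ++ (dHat kb sb ++ d)) (c.length + 0) = c ++ ins j (dHat kb sb ++ d) 0 :=
        ins_append_right j c (dHat kb sb ++ d) 0
      rw [Nat.add_zero] at h2
      simp only [List.append_assoc]
      rw [h2, ins_zero_eq_dHat j hne2, dHat_append [j] d hsbne, dHat_dHat]
      rfl
    · -- last summand
      rw [derivMon_eq, Finset.mul_sum]
      apply Submodule.sum_mem
      intro i hi
      have hi' : i < d.length := by simpa using hi
      apply Submodule.subset_span
      rw [show monoW c * Dops kb s * monoW (ins j d i)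
          = monoW c * Dops kb s * monoW (ins j d i) from rfl]
      refine ⟨⟨c, ins j d i, kb, s, hs, rfl⟩, c ++ dHat kb sb ++ ins j d i,
        isLT_sandwich (monic_Dops hmon hsb kb).1 c _, ?_⟩
      apply oneStep_lt hlv
      refine ⟨(c ++ dHat kb sb).length + i, by simp; omega, ?_⟩
      rw [ins_append_right j (c ++ dHat kb sb) d i]

theorem span_Dops (hS : ∀ s ∈ S, ∃ sb, MonicW s sb) (il : List J) {v : List (Letter J X)}
    {f : MonoidAlgebra k (FreeMonoid (Letter J X))} (h : f ∈ Submodule.span k (SDW S v)) :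
    Dops il f ∈ Submodule.span k (SDW S (dHat il v)) := by
  induction il with
  | nil => rw [dHat_nil_idx]; exact h
  | cons j il ih =>
    rw [Dops_cons, show dHat (j :: il) v = dHat [j] (dHat il v) by rw [dHat_dHat]; rfl]
    exact span_Dop hS j ih

end SpanMachinery
section LemR
variable [LinearOrder J] [LinearOrder X]
variable {S : Set (MonoidAlgebra k (FreeMonoid (Letter J X)))}

theorem lemR' (hS : ∀ s ∈ S, ∃ sb, MonicW s sb)
    {s : MonoidAlgebra k (FreeMonoid (Letter J X))} {sb : List (Letter J X)}
    (hs : s ∈ S) (hm : MonicW s sb) (hsb : sb ≠ []) (kb : List J)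
    (d : List (Letter J X)) (il : List J) :
    Dops il (Dops kb s * monoW d) - Dops (il ++ kb) s * monoW d
      ∈ Submodule.span k (SDW S (dHat il (dHat kb sb ++ d))) := by
  induction il with
  | nil =>
    show Dops kb s * monoW d - Dops kb s * monoW d ∈ _
    rw [sub_self]
    exact Submodule.zero_mem _
  | cons j il ih =>
    have hsbne : dHat kb sb ≠ [] := dHat_ne_nil kb hsb
    have hw' : dHat (j :: il) (dHat kb sb ++ d) = dHat ((j :: il) ++ kb) sb ++ d := by
      rw [dHat_append _ _ hsbne, dHat_dHat]
    have key : Dops (j :: il) (Dops kb s * monoW d) - Dops ((j :: il) ++ kb) s * monoW d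
        = Dops (il ++ kb) s * derivMon j d
          + Dop j (Dops il (Dops kb s * monoW d) - Dops (il ++ kb) s * monoW d) := by
      have h1 : Dops (j :: il) (Dops kb s * monoW d)
          = Dop j (Dops il (Dops kb s * monoW d)) := Dops_cons ..
      have h2 : Dops il (Dops kb s * monoW d)
          = (Dops il (Dops kb s * monoW d) - Dops (il ++ kb) s * monoW d)
            + Dops (il ++ kb) s * monoW d := by abel
      rw [h1]
      conv_lhs => rw [h2]
      rw [map_add, Dop_mul]
      have h3 : Dop j (Dops (il ++ kb) s) = Dops ((j :: il) ++ kb) s := by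
        rw [← Dops_cons]; rfl
      rw [h3, Dop_monoW]
      abel
    rw [key]
    refine Submodule.add_mem _ ?_ ?_
    · rw [derivMon_eq, Finset.mul_sum]
      apply Submodule.sum_mem
      intro i hi
      apply Submodule.subset_span
      refine ⟨⟨[], ins j d i, il ++ kb, s, hs, ?_⟩,
        dHat (il ++ kb) sb ++ ins j d i, ?_, ?_⟩
      · rw [monoW_nil, one_mul]
      · have h4 : (monoW [] : MonoidAlgebra k (FreeMonoid (Letter J X)))
            * Dops (il ++ kb) s * monoW (ins j d i)
            = Dops (il ++ kb) s * monoW (ins j d i) := by rw [monoW_nil, one_mul]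
        have h5 := isLT_sandwich (monic_Dops hm hsb (il ++ kb)).1 [] (ins j d i)
        rw [h4] at h5
        exact h5
      · rw [hw']
        refine degLex_head_len' (by simp) hsb ?_
        simp
    · have := span_Dop hS j ih
      rw [dHat_dHat] at this
      exact this

theorem lemR (hS : ∀ s ∈ S, ∃ sb, MonicW s sb)
    {s : MonoidAlgebra k (FreeMonoid (Letter J X))} {sb : List (Letter J X)}
    (hs : s ∈ S) (hm : MonicW s sb) (hsb : sb ≠ []) (kb : List J)
    {e : List (Letter J X)} (he : e ≠ []) (d : List (Letter J X)) (il : List J) :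
    Dops il (monoW e * (Dops kb s * monoW d)) - monoW (dHat il e) * (Dops kb s * monoW d)
      ∈ Submodule.span k (SDW S (dHat il (e ++ dHat kb sb ++ d))) := by
  induction il with
  | nil =>
    show monoW e * (Dops kb s * monoW d) - monoW (dHat [] e) * (Dops kb s * monoW d) ∈ _
    rw [show dHat ([] : List J) e = e from dHat_nil_idx e, sub_self]
    exact Submodule.zero_mem _
  | cons j il ih =>
    have hsbne : dHat kb sb ≠ [] := dHat_ne_nil kb hsb
    have hene : dHat il e ≠ [] := dHat_ne_nil il he
    have hw' : dHat (j :: il) (e ++ dHat kb sb ++ d)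
        = dHat (j :: il) e ++ (dHat kb sb ++ d) := by
      rw [List.append_assoc, dHat_append _ _ he]
    have hderiv : (derivMon j (dHat il e) : MonoidAlgebra k (FreeMonoid (Letter J X)))
        = monoW (dHat (j :: il) e)
          + ∑ i ∈ (Finset.range e.length).erase 0, monoW (ins j (dHat il e) i) := by
      rw [derivMon_eq, dHat_length]
      rw [← Finset.add_sum_erase _ _ (Finset.mem_range.mpr (List.length_pos_iff.mpr he))]
      congr 1
      rw [ins_zero_eq_dHat j hene, dHat_dHat, List.singleton_append]
    have key : Dops (j :: il) (monoW e * (Dops kb s * monoW d))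
          - monoW (dHat (j :: il) e) * (Dops kb s * monoW d)
        = (∑ i ∈ (Finset.range e.length).erase 0, monoW (ins j (dHat il e) i))
            * (Dops kb s * monoW d)
          + (monoW (dHat il e) * (Dops (j :: kb) s * monoW d)
          + (monoW (dHat il e) * (Dops kb s * derivMon j d)
          + Dop j (Dops il (monoW e * (Dops kb s * monoW d))
              - monoW (dHat il e) * (Dops kb s * monoW d)))) := by
      have h1 : Dops (j :: il) (monoW e * (Dops kb s * monoW d))
          = Dop j (Dops il (monoW e * (Dops kb s * monoW d))) := Dops_cons ..
      have h2 : Dops il (monoW e * (Dops kb s * monoW d))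
          = (Dops il (monoW e * (Dops kb s * monoW d))
              - monoW (dHat il e) * (Dops kb s * monoW d))
            + monoW (dHat il e) * (Dops kb s * monoW d) := by abel
      rw [h1]
      conv_lhs => rw [h2]
      rw [map_add, Dop_mul j (monoW (dHat il e)), Dop_monoW, hderiv,
        Dop_mul j (Dops kb s) (monoW d), ← Dops_cons, Dop_monoW]
      noncomm_ring
    rw [key]
    refine Submodule.add_mem _ ?_ (Submodule.add_mem _ ?_ (Submodule.add_mem _ ?_ ?_))
    · -- scattered first-block terms
      rw [Finset.sum_mul]
      apply Submodule.sum_mem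
      intro i hi
      obtain ⟨hi0, hir⟩ := Finset.mem_erase.mp hi
      have hir' : i < (dHat il e).length := by
        rw [dHat_length]; exact Finset.mem_range.mp hir
      have hone : OneStep j (dHat il e) (ins j (dHat il e) i) := ⟨i, hir', rfl⟩
      have hlt : DegLexLt (ins j (dHat il e) i) (dHat (j :: il) e) := by
        rcases scatter_cmp (dHat il e) (Scatter.cons (Scatter.nil _) hone)
            (Or.inl rfl) rfl with ⟨heq, _⟩ | hlt
        · exact absurd heq (ins_ne_dHat j hene hi0)
        · rw [dHat_dHat] at hlt
          exact hlt
      apply Submodule.subset_span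
      refine ⟨⟨ins j (dHat il e) i, d, kb, s, hs, by rw [mul_assoc]⟩,
        ins j (dHat il e) i ++ dHat kb sb ++ d, ?_, ?_⟩
      · have := isLT_sandwich (monic_Dops hm hsb kb).1 (ins j (dHat il e) i) d
        rw [← mul_assoc]
        exact this
      · rw [hw', List.append_assoc]
        exact degLex_append_right _ hlt
    · apply Submodule.subset_span
      refine ⟨⟨dHat il e, d, j :: kb, s, hs, by rw [mul_assoc]⟩,
        dHat il e ++ dHat (j :: kb) sb ++ d, ?_, ?_⟩
      · rw [← mul_assoc]
        exact isLT_sandwich (monic_Dops hm hsb (j :: kb)).1 (dHat il e) d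
      · rw [hw']
        simp only [List.append_assoc]
        refine degLex_head_len' (by simp only [List.length_cons]; omega) he
          (by simp only [List.length_append, dHat_length])
    · rw [derivMon_eq, Finset.mul_sum, Finset.mul_sum]
      apply Submodule.sum_mem
      intro i hi
      apply Submodule.subset_span
      refine ⟨⟨dHat il e, ins j d i, kb, s, hs, by rw [mul_assoc]⟩,
        dHat il e ++ dHat kb sb ++ ins j d i, ?_, ?_⟩
      · rw [← mul_assoc]
        exact isLT_sandwich (monic_Dops hm hsb kb).1 (dHat il e) (ins j d i)
      · rw [hw']
        simp only [List.append_assoc]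
        refine degLex_head_len' (by simp only [List.length_cons]; omega) he
          (by simp only [List.length_append, dHat_length, ins_length])
    · have := span_Dop hS j ih
      rw [dHat_dHat] at this
      exact this

end LemR
section Helpers

theorem append_decomp {α : Type*} {x1 y1 x2 y2 : List α} (h : x1 ++ y1 = x2 ++ y2)
    (hl : x1.length ≤ x2.length) : ∃ g, x2 = x1 ++ g ∧ y1 = g ++ y2 := by
  have h1 : x1 = x2.take x1.length := by
    have h2 : x1 = (x1 ++ y1).take x1.length := by simp
    rw [h] at h2
    rwa [List.take_append_of_le_length hl] at h2
  refine ⟨x2.drop x1.length, ?_, ?_⟩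
  · conv_lhs => rw [← List.take_append_drop x1.length x2]
    rw [← h1]
  · have h3 : x1 ++ y1 = x1 ++ (x2.drop x1.length ++ y2) := by
      rw [h]
      conv_lhs => rw [← List.take_append_drop x1.length x2]
      rw [← h1, List.append_assoc]
    exact List.append_cancel_left h3

end Helpers

section Helpers2
variable [LinearOrder J] [LinearOrder X]
variable {S : Set (MonoidAlgebra k (FreeMonoid (Letter J X)))}

theorem sub_top_lt {f : MonoidAlgebra k (FreeMonoid (Letter J X))} {top : List (Letter J X)}
    (h : MonicW f top) : ∀ z, coeffW (monoW top - f) z ≠ 0 → DegLexLt z top := by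
  intro z hz
  have hsub : coeffW (monoW top - f) z
      = coeffW (monoW top : MonoidAlgebra k (FreeMonoid (Letter J X))) z - coeffW f z := by
    rw [coeffW, coeffW, coeffW, MonoidAlgebra.coeff_sub, Finsupp.sub_apply]
  by_cases hze : z = top
  · subst hze
    rw [hsub, coeffW_monoW_self, h.2, sub_self] at hz
    exact absurd rfl hz
  · rw [hsub, coeffW_monoW_ne hze, zero_sub, neg_ne_zero] at hz
    exact h.1.2 z hz hze

theorem top_sub_lt {f : MonoidAlgebra k (FreeMonoid (Letter J X))} {top : List (Letter J X)}
    (h : MonicW f top) : ∀ z, coeffW (f - monoW top) z ≠ 0 → DegLexLt z top := by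
  intro z hz
  apply sub_top_lt h z
  intro hc
  apply hz
  have h2 : coeffW (monoW top : MonoidAlgebra k (FreeMonoid (Letter J X))) z - coeffW f z = 0 := by
    rw [coeffW, coeffW, ← Finsupp.sub_apply, ← MonoidAlgebra.coeff_sub]; exact hc
  show coeffW f z - coeffW (monoW top : MonoidAlgebra k (FreeMonoid (Letter J X))) z = 0
  rw [sub_eq_zero] at h2 ⊢
  exact h2.symm

theorem span_mul_mid_right (hs : ∀ s' ∈ S, ∃ sb', MonicW s' sb')
    {s : MonoidAlgebra k (FreeMonoid (Letter J X))} {sb : List (Letter J X)}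
    (hsS : s ∈ S) (hm : MonicW s sb) (hsb : sb ≠ []) (il : List J)
    {F : MonoidAlgebra k (FreeMonoid (Letter J X))} {t2 : List (Letter J X)}
    (hF : ∀ z, coeffW F z ≠ 0 → DegLexLt z t2)
    (p q r : List (Letter J X)) :
    monoW p * Dops il s * (monoW q * F * monoW r)
      ∈ Submodule.span k (SDW S (p ++ dHat il sb ++ (q ++ t2 ++ r))) := by
  let L : MonoidAlgebra k (FreeMonoid (Letter J X)) →ₗ[k] MonoidAlgebra k (FreeMonoid (Letter J X)) :=
    (LinearMap.mulLeft k (monoW p * Dops il s * monoW q)).comp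
      (LinearMap.mulRight k (monoW r))
  have hL : monoW p * Dops il s * (monoW q * F * monoW r) = L F := by
    show _ = (monoW p * Dops il s * monoW q) * (F * monoW r)
    noncomm_ring
  rw [hL]
  have hexp : L F = F.coeff.sum fun z c => c • L (monoW z.toList) := by
    conv_lhs => rw [← MonoidAlgebra.sum_coeff_single F]
    rw [map_finsuppSum]
    exact Finsupp.sum_congr fun z _ => by rw [single_eq_smul_monoW, map_smul]
  rw [hexp, finsupp_sum_def]
  apply Submodule.sum_mem
  intro z hz
  apply Submodule.smul_mem
  have hzc : coeffW F z.toList ≠ 0 := by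
    have := Finsupp.mem_support_iff.mp hz
    simpa [coeffW, FreeMonoid.ofList_toList] using this
  have hLz : L (monoW z.toList)
      = monoW p * Dops il s * monoW (q ++ z.toList ++ r) := by
    show (monoW p * Dops il s * monoW q) * (monoW z.toList * monoW r) = _
    rw [monoW_mul, mul_assoc, monoW_mul, List.append_assoc]
  rw [hLz]
  apply Submodule.subset_span
  refine ⟨⟨p, q ++ z.toList ++ r, il, s, hsS, rfl⟩,
    p ++ dHat il sb ++ (q ++ z.toList ++ r),
    isLT_sandwich (monic_Dops hm hsb il).1 p _, ?_⟩
  have := degLex_sandwich (p ++ dHat il sb ++ q) r (hF z.toList hzc)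
  simpa [List.append_assoc] using this

theorem span_mul_mid_left (hs : ∀ s' ∈ S, ∃ sb', MonicW s' sb')
    {s : MonoidAlgebra k (FreeMonoid (Letter J X))} {sb : List (Letter J X)}
    (hsS : s ∈ S) (hm : MonicW s sb) (hsb : sb ≠ []) (il : List J)
    {F : MonoidAlgebra k (FreeMonoid (Letter J X))} {t1 : List (Letter J X)}
    (hF : ∀ z, coeffW F z ≠ 0 → DegLexLt z t1)
    (p q r : List (Letter J X)) :
    monoW p * F * (monoW q * Dops il s * monoW r)
      ∈ Submodule.span k (SDW S (p ++ t1 ++ (q ++ dHat il sb ++ r))) := by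
  let L : MonoidAlgebra k (FreeMonoid (Letter J X)) →ₗ[k] MonoidAlgebra k (FreeMonoid (Letter J X)) :=
    (LinearMap.mulLeft k (monoW p)).comp
      (LinearMap.mulRight k (monoW q * Dops il s * monoW r))
  have hL : monoW p * F * (monoW q * Dops il s * monoW r) = L F := by
    show _ = monoW p * (F * (monoW q * Dops il s * monoW r))
    noncomm_ring
  rw [hL]
  have hexp : L F = F.coeff.sum fun z c => c • L (monoW z.toList) := by
    conv_lhs => rw [← MonoidAlgebra.sum_coeff_single F]
    rw [map_finsuppSum]
    exact Finsupp.sum_congr fun z _ => by rw [single_eq_smul_monoW, map_smul]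
  rw [hexp, finsupp_sum_def]
  apply Submodule.sum_mem
  intro z hz
  apply Submodule.smul_mem
  have hzc : coeffW F z.toList ≠ 0 := by
    have := Finsupp.mem_support_iff.mp hz
    simpa [coeffW, FreeMonoid.ofList_toList] using this
  have hLz : L (monoW z.toList)
      = monoW (p ++ z.toList ++ q) * Dops il s * monoW r := by
    show monoW p * (monoW z.toList * (monoW q * Dops il s * monoW r)) = _
    rw [← monoW_mul, ← monoW_mul]
    noncomm_ring
  rw [hLz]
  apply Submodule.subset_span
  refine ⟨⟨p ++ z.toList ++ q, r, il, s, hsS, rfl⟩,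
    (p ++ z.toList ++ q) ++ dHat il sb ++ r,
    isLT_sandwich (monic_Dops hm hsb il).1 _ r, ?_⟩
  have := degLex_sandwich p (q ++ dHat il sb ++ r) (hF z.toList hzc)
  simpa [List.append_assoc] using this

end Helpers2
section MainAux
variable [LinearOrder J] [LinearOrder X]
variable {S : Set (MonoidAlgebra k (FreeMonoid (Letter J X)))}

theorem head_decomp {sb : List (Letter J X)} (hb : sb ≠ []) :
    ∃ al x r, sb = (al, x) :: r := by
  match sb with
  | [] => exact absurd rfl hb
  | (al, x) :: r => exact ⟨al, x, r, rfl⟩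

theorem main_aux (hS : ∀ s ∈ S, ∃ sb, MonicW s sb) (hgsb : IsGSB S)
    {s1 s2 : MonoidAlgebra k (FreeMonoid (Letter J X))} (hs1 : s1 ∈ S) (hs2 : s2 ∈ S)
    {sb1 sb2 : List (Letter J X)} (h1 : MonicW s1 sb1) (h2 : MonicW s2 sb2)
    (hb1 : sb1 ≠ []) (hb2 : sb2 ≠ [])
    (a1 b1 a2 b2 : List (Letter J X)) (ib jb : List J)
    (hw : a1 ++ dHat ib sb1 ++ b1 = a2 ++ dHat jb sb2 ++ b2)
    (hle : a1.length ≤ a2.length)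
    (haux : a1.length = a2.length → sb1.length ≤ sb2.length) :
    monoW a1 * Dops ib s1 * monoW b1 - monoW a2 * Dops jb s2 * monoW b2
      ∈ Submodule.span k (SDW S (a1 ++ dHat ib sb1 ++ b1)) := by
  have hw' : a1 ++ (dHat ib sb1 ++ b1) = a2 ++ (dHat jb sb2 ++ b2) := by
    simpa [List.append_assoc] using hw
  obtain ⟨g, hga, hgb⟩ := append_decomp hw' hle
  by_cases hcase : (dHat ib sb1).length ≤ g.length
  · -- CASE I : disjoint occurrences
    obtain ⟨c, hgc, hbc⟩ := append_decomp hgb hcase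
    have hA : (monoW b1 : MonoidAlgebra k (FreeMonoid (Letter J X))) = monoW c * (monoW (dHat jb sb2) * monoW b2) := by
      rw [monoW_mul, monoW_mul, hbc]
    have hB : (monoW a2 : MonoidAlgebra k (FreeMonoid (Letter J X))) = monoW a1 * (monoW (dHat ib sb1) * monoW c) := by
      rw [monoW_mul, monoW_mul, hga, hgc]
    have key : monoW a1 * Dops ib s1 * monoW b1 - monoW a2 * Dops jb s2 * monoW b2
        = monoW a1 * Dops ib s1
            * (monoW c * (monoW (dHat jb sb2) - Dops jb s2) * monoW b2)
          + monoW a1 * (Dops ib s1 - monoW (dHat ib sb1))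
            * (monoW c * Dops jb s2 * monoW b2) := by
      rw [hA, hB]
      noncomm_ring
    rw [key]
    have hloc : a1 ++ dHat ib sb1 ++ (c ++ dHat jb sb2 ++ b2) = a1 ++ dHat ib sb1 ++ b1 := by
      rw [hbc]
      simp [List.append_assoc]
    apply add_mem
    · have hmem := span_mul_mid_right hS hs1 h1 hb1 ib
        (sub_top_lt (monic_Dops h2 hb2 jb)) a1 c b2
      rwa [hloc] at hmem
    · have hmem := span_mul_mid_left hS hs2 h2 hb2 jb
        (top_sub_lt (monic_Dops h1 hb1 ib)) a1 c b2
      rwa [hloc] at hmem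
  · -- the two occurrences overlap
    obtain ⟨h', hu1g, hrest⟩ := append_decomp hgb.symm (le_of_lt (not_le.mp hcase))
    have hh'len : (dHat ib sb1).length = g.length + h'.length := by
      rw [hu1g]; simp
    have hh'ne : h' ≠ [] := by
      intro hc
      rw [hc, List.append_nil] at hu1g
      exact hcase (le_of_eq (by rw [hu1g]))
    obtain ⟨al1, x1, r1, hsb1⟩ := head_decomp hb1
    obtain ⟨al2, x2, r2, hsb2⟩ := head_decomp hb2
    by_cases hcase2 : sb2.length ≤ h'.length
    · -- the second occurrence is inside the first
      obtain ⟨d0, hh'd, hb2d⟩ := append_decomp hrest (by rw [dHat_length]; exact hcase2)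
      by_cases hgnil : g = []
      · -- aligned at the left end, equal blocks
        have ha2 : a2 = a1 := by rw [hga, hgnil, List.append_nil]
        have hlen12 : sb1.length ≤ sb2.length := haux (by rw [ha2])
        have hd0nil : d0 = [] := by
          have e1 : h'.length = sb2.length + d0.length := by rw [hh'd]; simp
          have e2 : (dHat ib sb1).length = h'.length := by
            rw [hu1g, hgnil, List.nil_append]
          rw [dHat_length] at e2
          have : d0.length = 0 := by omega
          simpa [List.length_eq_zero_iff] using this
        have hu1u2 : dHat ib sb1 = dHat jb sb2 := by
          rw [hu1g, hgnil, List.nil_append, hh'd, hd0nil, List.append_nil]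
        have hb2b1 : b2 = b1 := by
          rw [hb2d, hd0nil, List.nil_append]
        have hhd : ib ++ al1 = jb ++ al2 ∧ x1 = x2 ∧ r1 = r2 := by
          rw [hsb1, hsb2, dHat_cons, dHat_cons] at hu1u2
          have h3 := List.cons.injEq .. ▸ hu1u2
          obtain ⟨h4, h5⟩ := h3
          exact ⟨congrArg Prod.fst h4, congrArg Prod.snd h4, h5⟩
        obtain ⟨hhd1, hx12, hr12⟩ := hhd
        by_cases hij : ib.length ≤ jb.length
        · obtain ⟨kb, hjbk, hal⟩ := append_decomp hhd1 hij
          have hkey : dHat kb sb2 = sb1 ++ [] := by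
            rw [hsb1, hsb2, dHat_cons, List.append_nil, ← hal, ← hx12, ← hr12]
          have hTm := (hgsb s2 hs2 s1 hs1 sb2 sb1 h2 h1).2.1 kb [] hb2 hkey
          rw [trivMod_iff] at hTm
          have hT2 := span_sandwich a1 b1 (span_Dops hS ib hTm)
          have hloc : a1 ++ dHat ib (dHat kb sb2) ++ b1 = a1 ++ dHat ib sb1 ++ b1 := by
            rw [dHat_dHat, ← hjbk, ← hu1u2]
          rw [hloc] at hT2
          have helt : monoW a1 * Dops ib (Dops kb s2 - s1 * monoW []) * monoW b1
              = monoW a2 * Dops jb s2 * monoW b2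
                - monoW a1 * Dops ib s1 * monoW b1 := by
            rw [monoW_nil, mul_one, map_sub, ha2, hb2b1, hjbk, Dops_append]
            noncomm_ring
          rw [helt] at hT2
          have hneg := Submodule.neg_mem _ hT2
          rwa [neg_sub] at hneg
        · obtain ⟨kb, hibk, hal⟩ := append_decomp hhd1.symm (le_of_lt (not_le.mp hij))
          have hkey : sb2 = [] ++ dHat kb sb1 ++ [] := by
            rw [hsb1, hsb2, dHat_cons, List.append_nil, List.nil_append,
              ← hal, hx12, hr12]
          have hTm := (hgsb s2 hs2 s1 hs1 sb2 sb1 h2 h1).1 [] [] kb hb1 hkey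
          rw [trivMod_iff] at hTm
          have hT2 := span_sandwich a1 b1 (span_Dops hS jb hTm)
          have hloc : a1 ++ dHat jb sb2 ++ b1 = a1 ++ dHat ib sb1 ++ b1 := by
            rw [← hu1u2]
          rw [hloc] at hT2
          have helt : monoW a1 * Dops jb (s2 - monoW [] * Dops kb s1 * monoW []) * monoW b1
              = monoW a2 * Dops jb s2 * monoW b2
                - monoW a1 * Dops ib s1 * monoW b1 := by
            rw [monoW_nil, one_mul, mul_one, map_sub, ha2, hb2b1, hibk, Dops_append]
            noncomm_ring
          rw [helt] at hT2
          have hneg := Submodule.neg_mem _ hT2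
          rwa [neg_sub] at hneg
      · -- CASE II : second occurrence properly inside the first
        obtain ⟨gh, g', hg⟩ := List.exists_cons_of_ne_nil hgnil
        have hu1' : (ib ++ al1, x1) :: r1 = gh :: (g' ++ h') := by
          rw [← dHat_cons, ← hsb1, hu1g, hg]; rfl
        have hgh : gh = (ib ++ al1, x1) := ((List.cons.injEq .. ▸ hu1').1).symm
        have hr1 : r1 = g' ++ h' := (List.cons.injEq .. ▸ hu1').2
        have hg0 : dHat ib ((al1, x1) :: g') = g := by
          rw [dHat_cons, hg, hgh]
        have hsb1d : sb1 = ((al1, x1) :: g') ++ dHat jb sb2 ++ d0 := by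
          rw [hsb1, hr1, hh'd]
          simp [List.append_assoc]
        have hTm := (hgsb s1 hs1 s2 hs2 sb1 sb2 h1 h2).1 ((al1, x1) :: g') d0 jb hb2 hsb1d
        rw [trivMod_iff] at hTm
        have hT2 := span_sandwich a1 b1 (span_Dops hS ib hTm)
        have hR := lemR hS hs2 h2 hb2 jb (List.cons_ne_nil (al1, x1) g') d0 ib
        rw [← hsb1d] at hR
        have hR2 := span_sandwich a1 b1 hR
        have key : monoW a1 * Dops ib s1 * monoW b1 - monoW a2 * Dops jb s2 * monoW b2
            = monoW a1
                * Dops ib (s1 - monoW ((al1, x1) :: g') * Dops jb s2 * monoW d0)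
                * monoW b1
              + monoW a1
                * (Dops ib (monoW ((al1, x1) :: g') * (Dops jb s2 * monoW d0))
                   - monoW (dHat ib ((al1, x1) :: g')) * (Dops jb s2 * monoW d0))
                * monoW b1 := by
          have hBm : (monoW a2 : MonoidAlgebra k (FreeMonoid (Letter J X))) = monoW a1 * monoW g := by rw [monoW_mul, hga]
          have hbm : (monoW b2 : MonoidAlgebra k (FreeMonoid (Letter J X))) = monoW d0 * monoW b1 := by rw [monoW_mul, hb2d]
          rw [hBm, hbm, hg0, map_sub]
          noncomm_ring
        rw [key]
        exact add_mem hT2 hR2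
    · -- CASE III : proper intersection  (or left-aligned with sb1 shorter)
      have hcase2' : h'.length ≤ (dHat jb sb2).length := by
        rw [dHat_length]; omega
      obtain ⟨e0, hu2h, hb1e⟩ := append_decomp hrest.symm hcase2'
      have he0ne : e0 ≠ [] := by
        intro hc
        rw [hc, List.append_nil] at hu2h
        rw [← hu2h, dHat_length] at hcase2
        omega
      by_cases hgnil : g = []
      · -- aligned at the left end, first block shorter
        have ha2 : a2 = a1 := by rw [hga, hgnil, List.append_nil]
        have hu1h : dHat ib sb1 = h' := by rw [hu1g, hgnil, List.nil_append]
        have hu2u1 : dHat jb sb2 = dHat ib sb1 ++ e0 := by rw [hu2h, hu1h]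
        have hhd : jb ++ al2 = ib ++ al1 ∧ x2 = x1 ∧ r2 = r1 ++ e0 := by
          rw [hsb1, hsb2, dHat_cons, dHat_cons] at hu2u1
          simp only [List.cons_append] at hu2u1
          have h3 := List.cons.injEq .. ▸ hu2u1
          obtain ⟨h4, h5⟩ := h3
          exact ⟨congrArg Prod.fst h4, congrArg Prod.snd h4, h5⟩
        obtain ⟨hhd1, hx12, hr12⟩ := hhd
        by_cases hij : ib.length ≤ jb.length
        · obtain ⟨kb, hjbk, hal⟩ := append_decomp hhd1.symm hij
          have hkey : dHat kb sb2 = sb1 ++ e0 := by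
            rw [hsb1, hsb2, dHat_cons, ← hal, hx12, hr12]
            rfl
          have hTm := (hgsb s2 hs2 s1 hs1 sb2 sb1 h2 h1).2.1 kb e0 hb2 hkey
          rw [trivMod_iff] at hTm
          have hT2 := span_sandwich a1 b2 (span_Dops hS ib hTm)
          have hloc : a1 ++ dHat ib (dHat kb sb2) ++ b2 = a1 ++ dHat ib sb1 ++ b1 := by
            rw [dHat_dHat, ← hjbk, hu2u1, hb1e]
            simp [List.append_assoc]
          rw [hloc] at hT2
          have hR := lemR' hS hs1 h1 hb1 [] e0 ib
          rw [List.append_nil, show dHat ([] : List J) sb1 = sb1 from dHat_nil_idx sb1,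
            show (Dops [] s1 : MonoidAlgebra k (FreeMonoid (Letter J X))) = s1 from rfl] at hR
          have hR2 := span_sandwich a1 b2 hR
          have hloc2 : a1 ++ dHat ib (sb1 ++ e0) ++ b2 = a1 ++ dHat ib sb1 ++ b1 := by
            rw [dHat_append _ _ hb1, hb1e]
            simp [List.append_assoc]
          rw [hloc2] at hR2
          have key : monoW a1 * Dops ib s1 * monoW b1 - monoW a2 * Dops jb s2 * monoW b2
              = -(monoW a1 * Dops ib (Dops kb s2 - s1 * monoW e0) * monoW b2)
                - monoW a1 * (Dops ib (s1 * monoW e0) - Dops ib s1 * monoW e0) * monoW b2 := by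
            have hbm : (monoW b1 : MonoidAlgebra k (FreeMonoid (Letter J X))) = monoW e0 * monoW b2 := by rw [monoW_mul, hb1e]
            rw [hbm, ha2, hjbk, Dops_append, map_sub]
            noncomm_ring
          rw [key]
          exact sub_mem (Submodule.neg_mem _ hT2) hR2
        · obtain ⟨kb, hibk, hal⟩ := append_decomp hhd1 (le_of_lt (not_le.mp hij))
          have hkey : sb2 = [] ++ dHat kb sb1 ++ e0 := by
            rw [hsb1, hsb2, dHat_cons, List.nil_append, ← hal, hx12, hr12]
            rfl
          have hTm := (hgsb s2 hs2 s1 hs1 sb2 sb1 h2 h1).1 [] e0 kb hb1 hkey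
          rw [trivMod_iff] at hTm
          have hT2 := span_sandwich a1 b2 (span_Dops hS jb hTm)
          have hloc : a1 ++ dHat jb sb2 ++ b2 = a1 ++ dHat ib sb1 ++ b1 := by
            rw [hu2u1, hb1e]
            simp [List.append_assoc]
          rw [hloc] at hT2
          have hR := lemR' hS hs1 h1 hb1 kb e0 jb
          rw [← hibk] at hR
          have hR2 := span_sandwich a1 b2 hR
          have hloc2 : a1 ++ dHat jb (dHat kb sb1 ++ e0) ++ b2 = a1 ++ dHat ib sb1 ++ b1 := by
            rw [dHat_append _ _ (dHat_ne_nil kb hb1), dHat_dHat, ← hibk, hb1e]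
            simp [List.append_assoc]
          rw [hloc2] at hR2
          have key : monoW a1 * Dops ib s1 * monoW b1 - monoW a2 * Dops jb s2 * monoW b2
              = -(monoW a1 * Dops jb (s2 - monoW [] * Dops kb s1 * monoW e0) * monoW b2)
                - monoW a1 * (Dops jb (Dops kb s1 * monoW e0) - Dops ib s1 * monoW e0)
                    * monoW b2 := by
            have hbm : (monoW b1 : MonoidAlgebra k (FreeMonoid (Letter J X))) = monoW e0 * monoW b2 := by rw [monoW_mul, hb1e]
            rw [hbm, ha2, hibk, Dops_append, map_sub, monoW_nil, one_mul]
            noncomm_ring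
          rw [key]
          exact sub_mem (Submodule.neg_mem _ hT2) hR2
      · -- proper intersection
        obtain ⟨gh, g', hg⟩ := List.exists_cons_of_ne_nil hgnil
        have hu1' : (ib ++ al1, x1) :: r1 = gh :: (g' ++ h') := by
          rw [← dHat_cons, ← hsb1, hu1g, hg]; rfl
        have hgh : gh = (ib ++ al1, x1) := ((List.cons.injEq .. ▸ hu1').1).symm
        have hr1 : r1 = g' ++ h' := (List.cons.injEq .. ▸ hu1').2
        have hg0 : dHat ib ((al1, x1) :: g') = g := by
          rw [dHat_cons, hg, hgh]
        have hsb1h : sb1 = ((al1, x1) :: g') ++ h' := by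
          rw [hsb1, hr1]; rfl
        have hkey : sb1 ++ e0 = ((al1, x1) :: g') ++ dHat jb sb2 := by
          rw [hsb1h, hu2h]
          simp [List.append_assoc]
        have hlen3 : (sb1 ++ e0).length < sb1.length + sb2.length := by
          have e1 : (dHat jb sb2).length = h'.length + e0.length := by rw [hu2h]; simp
          rw [dHat_length] at e1
          have e2 : h'.length ≠ 0 := fun hc => hh'ne (List.length_eq_zero_iff.mp hc)
          simp only [List.length_append]
          omega
        have hTm := (hgsb s1 hs1 s2 hs2 sb1 sb2 h1 h2).2.2 ((al1, x1) :: g') e0 jb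
          (List.cons_ne_nil _ _) he0ne hb1 hb2 hkey hlen3
        rw [trivMod_iff] at hTm
        have hT2 := span_sandwich a1 b2 (span_Dops hS ib hTm)
        have hloc : a1 ++ dHat ib (sb1 ++ e0) ++ b2 = a1 ++ dHat ib sb1 ++ b1 := by
          rw [dHat_append _ _ hb1, hb1e]
          simp [List.append_assoc]
        rw [hloc] at hT2
        have hR1 := lemR' hS hs1 h1 hb1 [] e0 ib
        rw [List.append_nil, show dHat ([] : List J) sb1 = sb1 from dHat_nil_idx sb1,
          show (Dops [] s1 : MonoidAlgebra k (FreeMonoid (Letter J X))) = s1 from rfl] at hR1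
        have hR1s := span_sandwich a1 b2 hR1
        rw [hloc] at hR1s
        have hR2 := lemR hS hs2 h2 hb2 jb (List.cons_ne_nil (al1, x1) g') [] ib
        rw [List.append_nil, ← hkey] at hR2
        have hR2s := span_sandwich a1 b2 hR2
        rw [hloc] at hR2s
        have key : monoW a1 * Dops ib s1 * monoW b1 - monoW a2 * Dops jb s2 * monoW b2
            = monoW a1 * Dops ib (s1 * monoW e0 - monoW ((al1, x1) :: g') * Dops jb s2)
                * monoW b2
              - monoW a1 * (Dops ib (s1 * monoW e0) - Dops ib s1 * monoW e0) * monoW b2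
              + monoW a1
                * (Dops ib (monoW ((al1, x1) :: g') * (Dops jb s2 * monoW []))
                   - monoW (dHat ib ((al1, x1) :: g')) * (Dops jb s2 * monoW []))
                * monoW b2 := by
          have hbm : (monoW b1 : MonoidAlgebra k (FreeMonoid (Letter J X))) = monoW e0 * monoW b2 := by rw [monoW_mul, hb1e]
          have hBm : (monoW a2 : MonoidAlgebra k (FreeMonoid (Letter J X))) = monoW a1 * monoW g := by rw [monoW_mul, hga]
          rw [hbm, hBm, hg0, map_sub, monoW_nil, mul_one]
          noncomm_ring
        rw [key]
        exact add_mem (sub_mem hT2 hR1s) hR2s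

end MainAux
/-- If `S` is a Gröbner–Shirshov basis and `w = a₁·d^ī(s̄₁)·b₁ = a₂·d^j̄(s̄₂)·b₂`, then
`a₁·D^ī(s₁)·b₁ − a₂·D^j̄(s₂)·b₂ ≡ 0 mod (S, w)`. -/
theorem stmt11 [LinearOrder J] [LinearOrder X]
    [IsWellOrder J (· < ·)] [IsWellOrder X (· < ·)]
    (S : Set (MonoidAlgebra k (FreeMonoid (Letter J X))))
    (hS : ∀ s ∈ S, ∃ sb, MonicW s sb) (hgsb : IsGSB S)
    (s1 s2 : MonoidAlgebra k (FreeMonoid (Letter J X))) (hs1 : s1 ∈ S) (hs2 : s2 ∈ S)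
    (sb1 sb2 : List (Letter J X)) (h1 : MonicW s1 sb1) (h2 : MonicW s2 sb2)
    (hb1 : sb1 ≠ []) (hb2 : sb2 ≠ [])
    (a1 b1 a2 b2 : List (Letter J X)) (ib jb : List J)
    (hw : a1 ++ dHat ib sb1 ++ b1 = a2 ++ dHat jb sb2 ++ b2) :
    TrivMod S (a1 ++ dHat ib sb1 ++ b1)
      (monoW a1 * Dops ib s1 * monoW b1 - monoW a2 * Dops jb s2 * monoW b2) := by
  rw [trivMod_iff]
  by_cases hc : a1.length < a2.length ∨ (a1.length = a2.length ∧ sb1.length ≤ sb2.length)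
  · refine main_aux hS hgsb hs1 hs2 h1 h2 hb1 hb2 a1 b1 a2 b2 ib jb hw ?_ ?_
    · rcases hc with h | ⟨h, _⟩
      · exact le_of_lt h
      · exact le_of_eq h
    · intro he
      rcases hc with h | ⟨_, h⟩
      · exact absurd he (ne_of_lt h)
      · exact h
  · push_neg at hc
    have hle2 : a2.length ≤ a1.length := hc.1
    have haux2 : a2.length = a1.length → sb2.length ≤ sb1.length := by
      intro he
      exact le_of_lt (hc.2 he.symm)
    have hmem := main_aux hS hgsb hs2 hs1 h2 h1 hb2 hb1 a2 b2 a1 b1 jb ib hw.symm hle2 haux2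
    rw [hw]
    have hneg := Submodule.neg_mem _ hmem
    rwa [neg_sub] at hneg
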